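/- arXiv:2404.01915 — 4 statements merged into one kernel-verified Lean document; each statement's English description precedes it below -/
import Mathlib

section
/- The characteristic polynomial of the 3×3 rational matrix M = [[-44,-330,-615],[60,451,840],[165,1230,2296]] is X³ - 2703·X² + 2703·X - 1. -/
open Matrix Polynomial

theorem stmt_1 :
    (!![-44, -330, -615; 60, 451, 840; 165, 1230, 2296] : Matrix (Fin 3) (Fin 3) ℚ).charpoly =
      X ^ 3 - 2703 * X ^ 2 + 2703 * X - 1 := by
  rw [Matrix.charpoly, Matrix.det_fin_three]
  simp [Matrix.charmatrix_apply, Matrix.one_apply, map_ofNat]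
  ring
end

section
/- The set of real eigenvalues of the 3×3 real matrix M = [[-44,-330,-615],[60,451,840],[165,1230,2296]] is exactly {1, 1351 + 780·√3, 1351 - 780·√3}. -/
open Matrix

theorem stmt_3 :
    {lam : ℝ | ∃ v : Fin 3 → ℝ, v ≠ 0 ∧
        (!![-44, -330, -615; 60, 451, 840; 165, 1230, 2296] : Matrix (Fin 3) (Fin 3) ℝ).mulVec v
          = lam • v} =
      {1, 1351 + 780 * Real.sqrt 3, 1351 - 780 * Real.sqrt 3} := by
  ext lam
  simp only [Set.mem_setOf_eq, Set.mem_insert_iff, Set.mem_singleton_iff]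
  set A : Matrix (Fin 3) (Fin 3) ℝ :=
    !![-44, -330, -615; 60, 451, 840; 165, 1230, 2296] with hA
  have key : (∃ v : Fin 3 → ℝ, v ≠ 0 ∧ A.mulVec v = lam • v) ↔
      (A - lam • 1).det = 0 := by
    rw [← Matrix.exists_mulVec_eq_zero_iff]
    constructor
    · rintro ⟨v, hv, h⟩
      exact ⟨v, hv, by
        rw [Matrix.sub_mulVec, h, Matrix.smul_mulVec, Matrix.one_mulVec, sub_self]⟩
    · rintro ⟨v, hv, h⟩
      refine ⟨v, hv, ?_⟩
      rw [Matrix.sub_mulVec, Matrix.smul_mulVec, Matrix.one_mulVec, sub_eq_zero] at h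
      exact h
  rw [key]
  have hdet : (A - lam • 1).det =
      -((lam - 1) * ((lam - (1351 + 780 * Real.sqrt 3)) *
        (lam - (1351 - 780 * Real.sqrt 3)))) := by
    have h3 : Real.sqrt 3 * Real.sqrt 3 = 3 :=
      Real.mul_self_sqrt (by norm_num)
    rw [hA]
    rw [Matrix.det_fin_three]
    simp [Matrix.sub_apply, Matrix.smul_apply, Matrix.one_apply]
    linear_combination (-780^2 * (lam - 1)) * h3
  rw [hdet]
  constructor
  · intro h
    have h' : (lam - 1) * ((lam - (1351 + 780 * Real.sqrt 3)) *
        (lam - (1351 - 780 * Real.sqrt 3))) = 0 := by linarith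
    rcases mul_eq_zero.mp h' with h1 | h2
    · left; linarith
    · rcases mul_eq_zero.mp h2 with h1 | h1
      · right; left; linarith
      · right; right; linarith
  · rintro (h | h | h) <;> rw [h] <;> ring
end

section
/- The real number 1351 + 780·√3 is an eigenvalue of the 3×3 matrix M = [[-44,-330,-615],[60,451,840],[165,1230,2296]] (viewed over ℂ), every complex eigenvalue λ of M satisfies |λ| ≤ 1351 + 780·√3, and moreover 1351 + 780·√3 > 1. In particular, the spectral radius of M equals 1351 + 780·√3 and is strictly greater than 1. -/
/-! The characteristic polynomial of `M` is `(1 - μ)(μ² - 2702μ + 1)`. The quadratic factor has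
the reciprocal roots `1351 ± 780√3 = (2 ± √3)⁶`, whose product is `1351² - 3·780² = 1`, so the
eigenvalues are `1`, `d₁ = (2 + √3)⁶ > 1` and `d₁⁻¹ < 1`, and `d₁` has the largest modulus. -/

open Matrix

theorem Matrix.exists_mulVec_eq_smul_iff_det_sub_eq_zero {n R : Type*} [Fintype n] [DecidableEq n]
    [CommRing R] [IsDomain R] (A : Matrix n n R) (μ : R) :
    (∃ v, v ≠ 0 ∧ A *ᵥ v = μ • v) ↔ (A - μ • 1).det = 0 := by
  rw [← exists_mulVec_eq_zero_iff]
  simp only [sub_mulVec, smul_mulVec, one_mulVec, sub_eq_zero]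

def pullbackMatrix : Matrix (Fin 3) (Fin 3) ℂ :=
  !![-44, -330, -615; 60, 451, 840; 165, 1230, 2296]

noncomputable def d₁ : ℝ := 1351 + 780 * √3

theorem one_lt_d₁ : 1 < d₁ :=
  lt_add_of_lt_of_nonneg (by norm_num) (by positivity)

theorem inv_d₁ : d₁⁻¹ = 1351 - 780 * √3 := by
  refine inv_eq_of_mul_eq_one_right ?_
  rw [d₁]
  linear_combination (-608400 : ℝ) * Real.sq_sqrt (show (0 : ℝ) ≤ 3 by norm_num)

theorem det_pullbackMatrix_sub_smul (μ : ℂ) :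
    (pullbackMatrix - μ • 1).det = (1 - μ) * (μ - (d₁ : ℂ)) * (μ - ((d₁⁻¹ : ℝ) : ℂ)) := by
  have hsqrt : ((√3 : ℝ) : ℂ) ^ 2 = 3 := by
    rw [← Complex.ofReal_pow, Real.sq_sqrt (by norm_num)]
    norm_num
  rw [inv_d₁, d₁, det_fin_three]
  simp only [pullbackMatrix, Matrix.sub_apply, Matrix.smul_apply, of_apply, cons_val', cons_val,
    cons_val_zero, cons_val_one, cons_val_fin_one, one_apply_eq, one_apply_ne, ne_eq, Fin.reduceEq,
    not_false_eq_true, smul_eq_mul, mul_one, mul_zero, sub_zero]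
  push_cast
  linear_combination (608400 * (1 - μ)) * hsqrt

theorem pullbackMatrix_hasEigenvector_iff (μ : ℂ) :
    (∃ v, v ≠ 0 ∧ pullbackMatrix *ᵥ v = μ • v) ↔ μ = 1 ∨ μ = d₁ ∨ μ = ((d₁⁻¹ : ℝ) : ℂ) := by
  rw [exists_mulVec_eq_smul_iff_det_sub_eq_zero, det_pullbackMatrix_sub_smul]
  simp only [mul_eq_zero, sub_eq_zero, eq_comm (a := (1 : ℂ)), or_assoc]

theorem stmt_4 :
    (∃ v : Fin 3 → ℂ, v ≠ 0 ∧
        (!![-44, -330, -615; 60, 451, 840; 165, 1230, 2296] : Matrix (Fin 3) (Fin 3) ℂ).mulVec v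
          = (((1351 + 780 * Real.sqrt 3 : ℝ) : ℂ)) • v) ∧
    (∀ lam : ℂ, (∃ v : Fin 3 → ℂ, v ≠ 0 ∧
        (!![-44, -330, -615; 60, 451, 840; 165, 1230, 2296] : Matrix (Fin 3) (Fin 3) ℂ).mulVec v
          = lam • v) → ‖lam‖ ≤ 1351 + 780 * Real.sqrt 3) ∧
    (1 : ℝ) < 1351 + 780 * Real.sqrt 3 := by
  have hd₁ : 1 < d₁ := one_lt_d₁
  have hd₁_pos : 0 < d₁ := zero_lt_one.trans hd₁
  refine ⟨(pullbackMatrix_hasEigenvector_iff _).2 (Or.inr (Or.inl rfl)), fun μ hμ => ?_, hd₁⟩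
  change ‖μ‖ ≤ d₁
  rcases (pullbackMatrix_hasEigenvector_iff μ).1 hμ with rfl | rfl | rfl
  · simpa using hd₁.le
  · rw [Complex.norm_real, Real.norm_of_nonneg hd₁_pos.le]
  · rw [Complex.norm_real, Real.norm_of_nonneg (inv_pos.2 hd₁_pos).le]
    exact (inv_lt_one_of_one_lt₀ hd₁).le.trans hd₁.le
end

section
/- Let M = [[-44,-330,-615],[60,451,840],[165,1230,2296]] be regarded as a linear endomorphism of ℚ³. Then the only one-dimensional M-stable subspace of ℚ³ is the span of (1, -2, 1), and the only two-dimensional M-stable subspace of ℚ³ is the hyperplane {(x₁, x₂, x₃) ∈ ℚ³ : x₁ - 2·x₂ + x₃ = 0}. -/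
open Matrix

/-- The matrix in question. -/
private def Mmat : Matrix (Fin 3) (Fin 3) ℚ :=
  !![-44, -330, -615; 60, 451, 840; 165, 1230, 2296]

/-- The linear functional `v ↦ v 0 - 2 * v 1 + v 2`. -/
private def fℓ : (Fin 3 → ℚ) →ₗ[ℚ] ℚ where
  toFun v := v 0 - 2 * v 1 + v 2
  map_add' x y := by simp [Pi.add_apply]; ring
  map_smul' c x := by simp [Pi.smul_apply, smul_eq_mul]; ring

private lemma fℓ_mulVec (w : Fin 3 → ℚ) : fℓ (Mmat.mulVec w) = fℓ w := by
  simp [fℓ, Mmat, Matrix.mulVec, dotProduct, Fin.sum_univ_three]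
  ring

/-- Cayley–Hamilton style identity: `(M² - 2702 M + 1) w = (-450 * fℓ w) • (1,-2,1)`. -/
private lemma key_identity (w : Fin 3 → ℚ) :
    Mmat.mulVec (Mmat.mulVec w) - (2702 : ℚ) • Mmat.mulVec w + w
      = (-450 * fℓ w) • ![1, -2, 1] := by
  funext i
  fin_cases i <;>
    simp [fℓ, Mmat, Matrix.mulVec, dotProduct, Fin.sum_univ_three,
      Matrix.vecHead, Matrix.vecTail, Function.comp] <;>
    ring

/-- The quadratic `t² - 2702 t + 1` has no rational root. -/
private lemma no_rat_root (t : ℚ) : t ^ 2 - 2702 * t + 1 ≠ 0 := by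
  intro h
  have h2 : (t - 1351) * (t - 1351) = 1825200 := by nlinarith [sq_nonneg t]
  have h3 := (Rat.exists_mul_self (1825200 : ℚ)).mp ⟨_, h2⟩
  have h4 : Rat.sqrt (1825200 : ℚ) = (Nat.sqrt 1825200 : ℚ) := by
    exact_mod_cast Rat.sqrt_natCast 1825200
  have h5 : Nat.sqrt 1825200 = 1350 :=
    le_antisymm (by rw [← Nat.lt_succ_iff]; exact Nat.sqrt_lt.mpr (by norm_num))
      (Nat.le_sqrt.mpr (by norm_num))
  rw [h4, h5] at h3
  norm_num at h3

/-- No eigenvector of `M` with rational eigenvalue lies in the plane `fℓ = 0`. -/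
private lemma no_eigen_in_plane {u : Fin 3 → ℚ} {t : ℚ} (hu : u ≠ 0)
    (hfu : fℓ u = 0) (heq : Mmat.mulVec u = t • u) : False := by
  have hk := key_identity u
  rw [hfu, heq] at hk
  rw [Matrix.mulVec_smul, heq] at hk
  have h0 : (t ^ 2 - 2702 * t + 1) • u = 0 := by
    rw [show (t ^ 2 - 2702 * t + 1) • u
        = t • t • u - (2702 : ℚ) • t • u + u by module, hk]
    simp
  rcases smul_eq_zero.mp h0 with h | h
  · exact no_rat_root t h
  · exact hu h

/-- A submodule of finrank one is spanned by a nonzero element. -/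
private lemma exists_gen {V : Type*} [AddCommGroup V] [Module ℚ V]
    (W : Submodule ℚ V) (h : Module.finrank ℚ W = 1) :
    ∃ w : V, w ∈ W ∧ w ≠ 0 ∧ W = Submodule.span ℚ {w} := by
  obtain ⟨v, hv0, hgen⟩ := finrank_eq_one_iff'.mp h
  refine ⟨(v : V), v.2, fun h0 => hv0 (Subtype.ext h0), le_antisymm ?_ ?_⟩
  · intro x hx
    obtain ⟨c, hc⟩ := hgen ⟨x, hx⟩
    have : c • (v : V) = x := congrArg Subtype.val hc
    exact this ▸ Submodule.smul_mem _ _ (Submodule.mem_span_singleton_self _)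
  · rw [Submodule.span_le, Set.singleton_subset_iff]
    exact v.2

theorem stmt_15 (W : Submodule ℚ (Fin 3 → ℚ))
    (hstable : ∀ w ∈ W,
      (!![-44, -330, -615; 60, 451, 840; 165, 1230, 2296] :
          Matrix (Fin 3) (Fin 3) ℚ).mulVec w ∈ W) :
    (Module.finrank ℚ W = 1 →
      W = Submodule.span ℚ ({![1, -2, 1]} : Set (Fin 3 → ℚ))) ∧
    (Module.finrank ℚ W = 2 →
      ∀ v : Fin 3 → ℚ, v ∈ W ↔ v 0 - 2 * v 1 + v 2 = 0) := by
  have hstable' : ∀ w ∈ W, Mmat.mulVec w ∈ W := hstable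
  -- If `w ∈ W` then the vector `(1,-2,1)` scaled by `-450 * fℓ w` is in `W`.
  have hNmem : ∀ w ∈ W, (-450 * fℓ w) • ![1, -2, 1] ∈ W := by
    intro w hw
    rw [← key_identity w]
    exact Submodule.add_mem _ (Submodule.sub_mem _
      (hstable' _ (hstable' _ hw)) (Submodule.smul_mem _ _ (hstable' _ hw))) hw
  constructor
  · -- dimension one case
    intro h1
    obtain ⟨w, hwW, hw0, hWspan⟩ := exists_gen W h1
    by_cases hfw : fℓ w = 0
    · -- eigenvector in the plane: contradiction
      exfalso
      have hMw : Mmat.mulVec w ∈ Submodule.span ℚ {w} := hWspan ▸ hstable' w hwW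
      obtain ⟨t, ht⟩ := Submodule.mem_span_singleton.mp hMw
      exact no_eigen_in_plane hw0 hfw (by rw [ht])
    · -- `(1,-2,1) ∈ W`, hence `W = span (1,-2,1)`
      have hc : (-450 : ℚ) * fℓ w ≠ 0 := by
        intro h; rcases mul_eq_zero.mp h with h | h
        · norm_num at h
        · exact hfw h
      have hv₀ : (![1, -2, 1] : Fin 3 → ℚ) ∈ W := by
        have := Submodule.smul_mem W (-450 * fℓ w)⁻¹ (hNmem w hwW)
        rwa [smul_smul, inv_mul_cancel₀ hc, one_smul] at this
      -- `v₀ = s • w` with `s ≠ 0`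
      have hv₀span : (![1, -2, 1] : Fin 3 → ℚ) ∈ Submodule.span ℚ {w} := hWspan ▸ hv₀
      obtain ⟨s, hs⟩ := Submodule.mem_span_singleton.mp hv₀span
      have hv₀ne : (![1, -2, 1] : Fin 3 → ℚ) ≠ 0 := by
        intro h
        have := congrFun h 0
        norm_num at this
      have hs0 : s ≠ 0 := by
        intro h; rw [h, zero_smul] at hs; exact hv₀ne hs.symm
      rw [hWspan]
      apply le_antisymm
      · rw [Submodule.span_le, Set.singleton_subset_iff]
        have : w = s⁻¹ • (![1, -2, 1] : Fin 3 → ℚ) := by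
          rw [← hs, smul_smul, inv_mul_cancel₀ hs0, one_smul]
        rw [this]
        exact Submodule.smul_mem _ _ (Submodule.mem_span_singleton_self _)
      · rw [Submodule.span_le, Set.singleton_subset_iff]
        rw [← hs]
        exact Submodule.smul_mem _ _ (Submodule.mem_span_singleton_self _)
  · -- dimension two case
    intro h2 v
    set P := LinearMap.ker fℓ with hP
    have hfin3 : Module.finrank ℚ (Fin 3 → ℚ) = 3 := by
      simp [Module.finrank_pi]
    have hrange : LinearMap.range fℓ = ⊤ := by
      rw [LinearMap.range_eq_top]
      intro c
      exact ⟨c • ![1, 0, 0], by simp [fℓ]⟩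
    have hPrank : Module.finrank ℚ P = 2 := by
      have := LinearMap.finrank_range_add_finrank_ker fℓ
      rw [hrange, finrank_top, Module.finrank_self, hfin3, ← hP] at this
      omega
    -- Show W ≤ P
    have hWP : W ≤ P := by
      by_contra hne
      obtain ⟨w, hwW, hfw⟩ : ∃ w ∈ W, fℓ w ≠ 0 := by
        by_contra hc
        push_neg at hc
        exact hne fun x hx => LinearMap.mem_ker.mpr (hc x hx)
      -- W ⊔ P = ⊤
      have hsup : W ⊔ P = ⊤ := by
        rw [eq_top_iff]
        intro x _
        have hx1 : (fℓ x / fℓ w) • w ∈ W := Submodule.smul_mem _ _ hwW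
        have hx2 : x - (fℓ x / fℓ w) • w ∈ P := by
          rw [hP, LinearMap.mem_ker, map_sub, LinearMap.map_smul, smul_eq_mul,
            div_mul_cancel₀ _ hfw, sub_self]
        have := Submodule.add_mem (W ⊔ P)
          (Submodule.mem_sup_left hx1) (Submodule.mem_sup_right hx2)
        rwa [add_sub_cancel] at this
      -- finrank (W ⊓ P) = 1
      have hdim := Submodule.finrank_sup_add_finrank_inf_eq W P
      rw [hsup, finrank_top, hfin3, h2, hPrank] at hdim
      have hinf : Module.finrank ℚ ↥(W ⊓ P) = 1 := by omega
      obtain ⟨u, huWP, hu0, huspan⟩ := exists_gen (W ⊓ P) hinf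
      obtain ⟨huW, huP⟩ := Submodule.mem_inf.mp huWP
      have hfu : fℓ u = 0 := LinearMap.mem_ker.mp (hP ▸ huP)
      have hMu : Mmat.mulVec u ∈ W ⊓ P := by
        refine Submodule.mem_inf.mpr ⟨hstable' u huW, ?_⟩
        rw [hP]
        exact LinearMap.mem_ker.mpr (by rw [fℓ_mulVec]; exact hfu)
      rw [huspan] at hMu
      obtain ⟨t, ht⟩ := Submodule.mem_span_singleton.mp hMu
      exact no_eigen_in_plane hu0 hfu (by rw [ht])
    have hWeq : W = P := Submodule.eq_of_le_of_finrank_eq hWP (by rw [h2, hPrank])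
    rw [hWeq]
    exact Iff.rfl
end
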